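/- arXiv:math/0609146 — 3 statements merged into one kernel-verified Lean document; each statement's English description precedes it below -/
import Mathlib

section
/- Let R be a ring, M a left R-module, and n ≥ 0. Suppose 0 ← M ←∂₀ P_0 ←∂₁ P_1 ← ⋯ ←∂_{n-1} P_{n-1} is an exact sequence (a partial free resolution of M of length n−1) with P_0, …, P_{n-1} finitely generated free left R-modules. Then M is of type FP_n if and only if Ker ∂_{n-1} is a finitely generated R-module. -/
open Function LinearMap TensorProduct MulOpposite

/-- A left `R`-module `M` is of type `FP n`: there is an exact sequence
`0 ← M ← P₀ ← P₁ ← ⋯ ← Pₙ` with each `Pᵢ` a finitely generated free left `R`-module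
(wlog `Pᵢ = Fin rᵢ → R`). -/
def IsFP (R : Type*) [Ring R] (M : Type*) [AddCommGroup M] [Module R M] (n : ℕ) : Prop :=
  ∃ (r : ℕ → ℕ) (d : ∀ i : ℕ, (Fin (r (i + 1)) → R) →ₗ[R] (Fin (r i) → R))
    (e : (Fin (r 0) → R) →ₗ[R] M),
    Function.Surjective e ∧
    (0 < n → LinearMap.ker e = LinearMap.range (d 0)) ∧
    ∀ i : ℕ, i + 1 < n → LinearMap.ker (d i) = LinearMap.range (d (i + 1))

/-- Left `FP n` of a ring `R` augmented by `ε : R →+* K`: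
`K` is a left `R`-module via `ε`, required to be of type `FP n`. -/
def LeftFP {K : Type*} [CommRing K] (R : Type*) [Ring R] (ε : R →+* K) (n : ℕ) : Prop :=
  letI : Module R K := Module.compHom K ε
  IsFP R K n

/-- Right `FP n`: right `R`-modules are left `Rᵐᵒᵖ`-modules. -/
def RightFP {K : Type*} [CommRing K] (R : Type*) [Ring R] (ε : R →+* K) (n : ℕ) : Prop :=
  LeftFP Rᵐᵒᵖ (ε.fromOpposite fun _ _ => mul_comm _ _) n

/-- Left multiplication by `a` on the first factor of `A ⊗[K] A`
(the free `(A,A)`-bimodule of rank one). -/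
noncomputable def lmulT (K A : Type*) [CommRing K] [Ring A] [Algebra K A] (a : A) :
    (A ⊗[K] A) →ₗ[K] A ⊗[K] A := LinearMap.rTensor A (LinearMap.mulLeft K a)

/-- Right multiplication by `b` on the second factor of `A ⊗[K] A`. -/
noncomputable def rmulT (K A : Type*) [CommRing K] [Ring A] [Algebra K A] (b : A) :
    (A ⊗[K] A) →ₗ[K] A ⊗[K] A := LinearMap.lTensor A (LinearMap.mulRight K b)

/-- An `(A,A)`-bimodule, presented as a `K`-module `M` together with commuting left/right
multiplication operators `lact, ract`, is of type `bi-FP n`: there is an exact sequence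
`0 ← M ← F₀ ← ⋯ ← Fₙ` of `(A,A)`-bimodules where each `Fᵢ` is a finitely generated free
bimodule (wlog `Fᵢ = Fin rᵢ → A ⊗[K] A`) and the maps are bimodule maps, i.e. `K`-linear maps
commuting with the two-sided `A`-actions. -/
def IsBiFP (K A : Type*) [CommRing K] [Ring A] [Algebra K A]
    (M : Type*) [AddCommGroup M] [Module K M]
    (lact ract : A → M →ₗ[K] M) (n : ℕ) : Prop :=
  ∃ (r : ℕ → ℕ)
    (d : ∀ i : ℕ, (Fin (r (i + 1)) → A ⊗[K] A) →ₗ[K] (Fin (r i) → A ⊗[K] A))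
    (e : (Fin (r 0) → A ⊗[K] A) →ₗ[K] M),
    (∀ (i : ℕ) (a : A), d i ∘ₗ (lmulT K A a).compLeft (Fin (r (i + 1))) =
        (lmulT K A a).compLeft (Fin (r i)) ∘ₗ d i) ∧
    (∀ (i : ℕ) (b : A), d i ∘ₗ (rmulT K A b).compLeft (Fin (r (i + 1))) =
        (rmulT K A b).compLeft (Fin (r i)) ∘ₗ d i) ∧
    (∀ a : A, e ∘ₗ (lmulT K A a).compLeft (Fin (r 0)) = lact a ∘ₗ e) ∧
    (∀ b : A, e ∘ₗ (rmulT K A b).compLeft (Fin (r 0)) = ract b ∘ₗ e) ∧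
    Function.Surjective e ∧
    (0 < n → LinearMap.ker e = LinearMap.range (d 0)) ∧
    ∀ i : ℕ, i + 1 < n → LinearMap.ker (d i) = LinearMap.range (d (i + 1))

/-- `A` is of type `bi-FP n`: the bimodule `A` (by left and right multiplication)
admits a resolution by finitely generated free bimodules. -/
def BiFP (K A : Type*) [CommRing K] [Ring A] [Algebra K A] (n : ℕ) : Prop :=
  IsBiFP K A A (fun a => LinearMap.mulLeft K a) (fun b => LinearMap.mulRight K b) n

/-- `A` (augmented by `ε`) is of type weak `bi-FP n`: the bimodule `K`
(with action `a·k·a' = ε(a) k ε(a')`) admits a resolution by f.g. free bimodules. -/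
def WeakBiFP (K A : Type*) [CommRing K] [Ring A] [Algebra K A] (ε : A →ₐ[K] K) (n : ℕ) :
    Prop :=
  IsBiFP K A K (fun a => ε a • LinearMap.id) (fun b => ε b • LinearMap.id) n

/-- The standard augmentation of a monoid algebra, `b ↦ 1` for `b ∈ B`. -/
noncomputable def aug (K B : Type*) [CommRing K] [Monoid B] : MonoidAlgebra K B →ₐ[K] K :=
  MonoidAlgebra.lift K K B 1

/-!
Schanuel's lemma: for surjections `e : P → M` and `e' : Q → M` from projective modules, both
`ker e × Q` and `ker e' × P` are isomorphic to the fibre product `P ×_M Q`. Being of type `FP n`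
is unchanged by adding or cancelling a finitely generated free summand `F`; for cancelling, if
`e : Q → X × F` starts a resolution, the kernel of `Q → X` is `ker e × F` because `F` is
projective. Hence for every surjection `e` from a finitely generated free module, `M` is of type
`FP (n + 1)` exactly when `ker e` is of type `FP n`, and the theorem follows by walking down the
given partial resolution one kernel at a time.
-/

theorem Module.Free.exists_linearEquiv_fin (R P : Type*) [Ring R] [AddCommGroup P] [Module R P]
    [Module.Finite R P] [Module.Free R P] : ∃ k : ℕ, Nonempty ((Fin k → R) ≃ₗ[R] P) :=
  ⟨_, ⟨((Module.Free.chooseBasis R P).equivFun.trans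
    (LinearEquiv.funCongrLeft R R (Fintype.equivFin _).symm)).symm⟩⟩

section Resolutions

variable {R : Type*} [Ring R] {M N X F P Q : Type*}
  [AddCommGroup M] [Module R M] [AddCommGroup N] [Module R N] [AddCommGroup X] [Module R X]
  [AddCommGroup F] [Module R F] [AddCommGroup P] [Module R P] [AddCommGroup Q] [Module R Q]
  {n : ℕ}

theorem IsFP.of_equiv (h : IsFP R M n) (φ : M ≃ₗ[R] N) : IsFP R N n := by
  obtain ⟨r, d, e, he, hker, hexact⟩ := h
  refine ⟨r, d, φ.toLinearMap ∘ₗ e, φ.surjective.comp he, fun hn => ?_, hexact⟩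
  rw [ker_comp, LinearEquiv.ker, Submodule.comap_bot, hker hn]

theorem isFP_zero_iff : IsFP R M 0 ↔ Module.Finite R M := by
  refine ⟨fun ⟨r, d, e, he, _⟩ => .of_surjective e he, fun _ => ?_⟩
  obtain ⟨k, e, he⟩ := Module.Finite.exists_fin' R M
  exact ⟨fun _ => k, fun _ => LinearMap.id, e, he, by omega, by omega⟩

theorem IsFP.exists_surjective_isFP_ker (h : IsFP R M (n + 1)) :
    ∃ (k : ℕ) (e : (Fin k → R) →ₗ[R] M), Surjective e ∧ IsFP R (ker e) n := by
  obtain ⟨r, d, e, he, hker, hexact⟩ := h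
  have hd : ker e = range (d 0) := hker n.succ_pos
  refine ⟨r 0, e, he, fun i => r (i + 1), fun i => d (i + 1),
    (d 0).codRestrict (ker e) (fun x => hd ▸ mem_range_self _ x), ?_, fun hn => ?_,
    fun i hi => hexact (i + 1) (by omega)⟩
  · rw [← range_eq_top, range_codRestrict, hd, Submodule.comap_subtype_self]
  · rw [ker_codRestrict]
    exact hexact 0 (by omega)

theorem IsFP.succ_of_surjective_fin {k : ℕ} (e : (Fin k → R) →ₗ[R] M) (he : Surjective e)
    (h : IsFP R (ker e) n) : IsFP R M (n + 1) := by
  obtain ⟨r, d, eK, heK, hker, hexact⟩ := h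
  refine ⟨fun | 0 => k | j + 1 => r j, fun | 0 => (ker e).subtype ∘ₗ eK | j + 1 => d j,
    e, he, fun _ => ?_, fun | 0, _ => ?_ | j + 1, hj => hexact j (by omega)⟩
  · change ker e = range ((ker e).subtype ∘ₗ eK)
    rw [range_comp, range_eq_top.mpr heK, Submodule.map_top, Submodule.range_subtype]
  · change ker ((ker e).subtype ∘ₗ eK) = range (d 0)
    rw [ker_comp, Submodule.ker_subtype, Submodule.comap_bot]
    exact hker (by omega)

theorem IsFP.succ_of_surjective [Module.Finite R P] [Module.Free R P] (e : P →ₗ[R] M)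
    (he : Surjective e) (h : IsFP R (ker e) n) : IsFP R M (n + 1) := by
  obtain ⟨k, ⟨φ⟩⟩ := Module.Free.exists_linearEquiv_fin R P
  refine IsFP.succ_of_surjective_fin (e ∘ₗ φ.toLinearMap) (he.comp φ.surjective) ?_
  rw [ker_comp]
  exact h.of_equiv (φ.ofSubmodule' (ker e)).symm

theorem IsFP.prod_free [Module.Finite R F] [Module.Free R F] (h : IsFP R X n) :
    IsFP R (X × F) n := by
  cases n with
  | zero =>
    rw [isFP_zero_iff] at h ⊢
    infer_instance
  | succ n =>
    obtain ⟨k, e, he, hker⟩ := h.exists_surjective_isFP_ker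
    refine IsFP.succ_of_surjective (e.prodMap LinearMap.id) (he.prodMap surjective_id) ?_
    rw [ker_prodMap, ker_id, ← Submodule.map_inl]
    exact hker.of_equiv (Submodule.equivMapOfInjective _ inl_injective _)

noncomputable def LinearMap.kerFstCompEquiv (e : Q →ₗ[R] X × F) (u : F →ₗ[R] Q)
    (hu : ∀ f, e (u f) = (0, f)) : ker (LinearMap.fst R X F ∘ₗ e) ≃ₗ[R] ker e × F where
  toFun x := (⟨x - u (e x).2, by
      have hx : (e x).1 = 0 := x.2
      ext <;> simp [hu, hx]⟩, (e x).2)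
  invFun y := ⟨y.1 + u y.2, by
      have hy : e y.1 = 0 := y.1.2
      simp [hu, hy]⟩
  map_add' x y := by ext <;> simp [add_sub_add_comm]
  map_smul' c x := by ext <;> simp [smul_sub]
  left_inv x := by ext; simp
  right_inv y := by
    have hy : e y.1 = 0 := y.1.2
    ext <;> simp [hu, hy]

def LinearMap.pullback (e : P →ₗ[R] M) (e' : Q →ₗ[R] M) : Submodule R (P × Q) :=
  eqLocus (e ∘ₗ LinearMap.fst R P Q) (e' ∘ₗ LinearMap.snd R P Q)

theorem LinearMap.mem_pullback {e : P →ₗ[R] M} {e' : Q →ₗ[R] M} {x : P × Q} :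
    x ∈ e.pullback e' ↔ e x.1 = e' x.2 :=
  Iff.rfl

noncomputable def LinearMap.pullbackCommEquiv (e : P →ₗ[R] M) (e' : Q →ₗ[R] M) :
    e.pullback e' ≃ₗ[R] e'.pullback e :=
  (LinearEquiv.prodComm R P Q).ofSubmodules _ _ <| by
    ext
    simp [Submodule.mem_map_equiv, mem_pullback, eq_comm]

noncomputable def LinearMap.pullbackEquivKerProd {e : P →ₗ[R] M} {e' : Q →ₗ[R] M}
    (u : P →ₗ[R] Q) (hu : ∀ p, e' (u p) = e p) : e.pullback e' ≃ₗ[R] ker e' × P where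
  toFun x := (⟨x.1.2 - u x.1.1, by
      have hx : e x.1.1 = e' x.1.2 := x.2
      simp [hu, hx]⟩, x.1.1)
  invFun y := ⟨(y.2, y.1 + u y.2), by
      have hy : e' y.1 = 0 := y.1.2
      simp [mem_pullback, hu, hy]⟩
  map_add' x y := by ext <;> simp [add_sub_add_comm]
  map_smul' c x := by ext <;> simp [smul_sub]
  left_inv x := by ext <;> simp
  right_inv y := by ext <;> simp

theorem schanuel [Module.Projective R P] [Module.Projective R Q] {e : P →ₗ[R] M}
    {e' : Q →ₗ[R] M} (he : Surjective e) (he' : Surjective e') :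
    Nonempty ((ker e × Q) ≃ₗ[R] ker e' × P) := by
  obtain ⟨u, hu⟩ := Module.projective_lifting_property e' e he'
  obtain ⟨v, hv⟩ := Module.projective_lifting_property e e' he
  exact ⟨(pullbackEquivKerProd v (LinearMap.congr_fun hv)).symm ≪≫ₗ
    pullbackCommEquiv e' e ≪≫ₗ pullbackEquivKerProd u (LinearMap.congr_fun hu)⟩

theorem IsFP.of_prod_free [Module.Finite R F] [Module.Free R F] (h : IsFP R (X × F) n) :
    IsFP R X n := by
  cases n with
  | zero =>
    rw [isFP_zero_iff] at h ⊢
    exact .of_surjective (LinearMap.fst R X F) Prod.fst_surjective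
  | succ n =>
    obtain ⟨k, e, he, hker⟩ := h.exists_surjective_isFP_ker
    obtain ⟨u, hu⟩ := Module.projective_lifting_property e (LinearMap.inr R X F) he
    exact .succ_of_surjective (LinearMap.fst R X F ∘ₗ e) (Prod.fst_surjective.comp he)
      (hker.prod_free.of_equiv (kerFstCompEquiv e u (LinearMap.congr_fun hu)).symm)

theorem IsFP.ker_of_surjective [Module.Finite R P] [Module.Free R P] (h : IsFP R M (n + 1))
    {e : P →ₗ[R] M} (he : Surjective e) : IsFP R (ker e) n := by
  obtain ⟨k, e', he', hker'⟩ := h.exists_surjective_isFP_ker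
  obtain ⟨σ⟩ := schanuel he he'
  exact (hker'.prod_free.of_equiv σ.symm).of_prod_free

theorem isFP_succ_iff_isFP_ker [Module.Finite R P] [Module.Free R P] {e : P →ₗ[R] M}
    (he : Surjective e) : IsFP R M (n + 1) ↔ IsFP R (ker e) n :=
  ⟨fun h => h.ker_of_surjective he, IsFP.succ_of_surjective e he⟩

theorem isFP_range_succ_iff_isFP_ker [Module.Finite R P] [Module.Free R P] (f : P →ₗ[R] N) :
    IsFP R (range f) (n + 1) ↔ IsFP R (ker f) n := by
  rw [isFP_succ_iff_isFP_ker f.surjective_rangeRestrict, ker_rangeRestrict]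

theorem isFP_ker_iff_of_exact {P : ℕ → Type*} [∀ i, AddCommGroup (P i)] [∀ i, Module R (P i)]
    (hfin : ∀ i < n, Module.Finite R (P i)) (hfree : ∀ i < n, Module.Free R (P i))
    {d : ∀ i : ℕ, P (i + 1) →ₗ[R] P i} (hexact : ∀ i, i + 2 < n → ker (d i) = range (d (i + 1)))
    {j m k : ℕ} (hjmk : j + m = k) (hk : k + 2 ≤ n) :
    IsFP R (ker (d j)) m ↔ IsFP R (ker (d k)) 0 := by
  induction m generalizing j with
  | zero =>
    subst hjmk
    rfl
  | succ m ih =>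
    have := hfin (j + 2) (by omega)
    have := hfree (j + 2) (by omega)
    rw [hexact j (by omega), isFP_range_succ_iff_isFP_ker, ih (by omega)]

end Resolutions

/-- consequence of the Generalised Schanuel Lemma.  Let `M` be a left
`R`-module and suppose `0 ← M ←ε P 0 ←d 0 P 1 ← ⋯ ←d (n-2) P (n-1)` is a partial free
resolution of `M` of length `n - 1` by finitely generated free modules (for `n = 0` this is
no data at all, and the relevant kernel is `M` itself).  Then `M` is of type `FP n` if and
only if the kernel of the last map is finitely generated. -/
theorem isFP_iff_fg_kernel
    (R : Type*) [Ring R] (M : Type*) [AddCommGroup M] [Module R M] (n : ℕ)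
    (P : ℕ → Type*) [∀ i, AddCommGroup (P i)] [∀ i, Module R (P i)]
    (hfin : ∀ i < n, Module.Finite R (P i)) (hfree : ∀ i < n, Module.Free R (P i))
    (e : P 0 →ₗ[R] M) (d : ∀ i : ℕ, P (i + 1) →ₗ[R] P i)
    (hsurj : 0 < n → Function.Surjective e)
    (hex0 : 1 < n → LinearMap.ker e = LinearMap.range (d 0))
    (hexi : ∀ i : ℕ, i + 2 < n → LinearMap.ker (d i) = LinearMap.range (d (i + 1))) :
    IsFP R M n ↔
      (match n with
        | 0 => Module.Finite R M
        | 1 => (LinearMap.ker e).FG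
        | (k + 2) => (LinearMap.ker (d k)).FG) := by
  obtain _ | _ | k := n
  · exact isFP_zero_iff
  · have := hfin 0 one_pos
    have := hfree 0 one_pos
    rw [isFP_succ_iff_isFP_ker (hsurj one_pos), isFP_zero_iff]
    exact Module.Finite.iff_fg
  · have := hfin 0 (by omega)
    have := hfree 0 (by omega)
    have := hfin 1 (by omega)
    have := hfree 1 (by omega)
    show _ ↔ (ker (d k)).FG
    rw [isFP_succ_iff_isFP_ker (hsurj (by omega)), hex0 (by omega), isFP_range_succ_iff_isFP_ker,
      isFP_ker_iff_of_exact hfin hfree hexi (zero_add k) (by omega), isFP_zero_iff]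
    exact Module.Finite.iff_fg
end

section
/- Let ρ: R → S and ι: S → R be ring homomorphisms with ρ ∘ ι = id_S. Let M be a left R-module, L a left S-module, and let α⁺: M → L and α⁻: L → M be additive maps with α⁺ ∘ α⁻ = id_L, such that α⁺ is an R-module homomorphism (L regarded as an R-module via ρ) and α⁻ is an S-module homomorphism (M regarded as an S-module via ι). If M is of type FP_n as a left R-module, then L is of type FP_n as a left S-module. -/
/-!
Induction on `n`, for all retractive pairs at once. Pushing a finite free cover `e : Rᵃ → M`
forward along `α⁺` gives a cover `e' : Sᵃ → L`, which settles `n = 0`. The kernels of `e` and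
`e'` need not form a retractive pair, but `ker e × Rᵃ` and `ker e'` do: if `φ : Rᵃ → Rᵃ` lifts
through `e` the map `x ↦ ∑ xⱼ • α⁻ (e' δⱼ)`, then `(k, x) ↦ ρ ∘ (k + x - φ x)` and
`y ↦ (φ (ι ∘ y), ι ∘ y)` are the two maps. As `ker e × Rᵃ` is of type `FP (n - 1)`, the induction
hypothesis applies to it.
-/

open Function LinearMap TensorProduct MulOpposite

section FP

variable {R : Type*} [Ring R] {M N : Type*} [AddCommGroup M] [Module R M]
  [AddCommGroup N] [Module R N]

theorem isFP_zero_iff_s11 :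
    IsFP R M 0 ↔ ∃ (a : ℕ) (e : (Fin a → R) →ₗ[R] M), Surjective e := by
  constructor
  · rintro ⟨r, -, e, he, -⟩
    exact ⟨r 0, e, he⟩
  · rintro ⟨a, e, he⟩
    exact ⟨fun _ => a, fun _ => 0, e, he, by simp, by simp⟩

theorem isFP_succ_iff {m : ℕ} :
    IsFP R M (m + 1) ↔
      ∃ (a : ℕ) (e : (Fin a → R) →ₗ[R] M), Surjective e ∧ IsFP R (ker e) m := by
  constructor
  · rintro ⟨r, d, e, he, hker, hexact⟩
    have hd : ∀ x, d 0 x ∈ ker e := fun x => hker m.succ_pos ▸ mem_range_self _ x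
    refine ⟨r 0, e, he, fun i => r (i + 1), fun i => d (i + 1), (d 0).codRestrict _ hd,
      ?_, fun _ => ?_, fun i hi => hexact (i + 1) (by omega)⟩
    · rintro ⟨y, hy⟩
      obtain ⟨x, rfl⟩ : y ∈ range (d 0) := hker m.succ_pos ▸ hy
      exact ⟨x, rfl⟩
    · rw [ker_codRestrict]
      exact hexact 0 (by omega)
  · rintro ⟨a, e, he, r, d, ε, hε, hker, hexact⟩
    refine ⟨fun | 0 => a | i + 1 => r i, fun | 0 => (ker e).subtype ∘ₗ ε | i + 1 => d i,
      e, he, fun _ => ?_, fun | 0, hi => ?_ | i + 1, hi => hexact i (by omega)⟩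
    · rw [range_comp, range_eq_top.mpr hε, Submodule.map_top, Submodule.range_subtype]
    · rw [ker_comp, Submodule.ker_subtype, ← ker]
      exact hker (by omega)

def finAddPiEquiv (a b : ℕ) : (Fin (a + b) → R) ≃ₗ[R] (Fin a → R) × (Fin b → R) :=
  (LinearEquiv.funCongrLeft R R finSumFinEquiv).trans
    (LinearEquiv.sumArrowLequivProdArrow _ _ R R)

theorem IsFP.prod {n : ℕ} (hM : IsFP R M n) (hN : IsFP R N n) : IsFP R (M × N) n := by
  obtain ⟨r, d, e, he, hker, hexact⟩ := hM
  obtain ⟨r', d', e', he', hker', hexact'⟩ := hN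
  let Ψ i := finAddPiEquiv (R := R) (r i) (r' i)
  let D i : (Fin (r (i + 1) + r' (i + 1)) → R) →ₗ[R] (Fin (r i + r' i) → R) :=
    (Ψ i).symm.toLinearMap ∘ₗ (d i).prodMap (d' i) ∘ₗ (Ψ (i + 1)).toLinearMap
  have hkerD i : ker (D i) = (ker ((d i).prodMap (d' i))).comap (Ψ (i + 1)).toLinearMap := by
    rw [LinearEquiv.ker_comp, ker_comp]
  have hrangeD i : range (D i) = (range ((d i).prodMap (d' i))).comap (Ψ i).toLinearMap := by
    rw [range_comp, LinearEquiv.range_comp, Submodule.map_equiv_eq_comap_symm,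
      LinearEquiv.symm_symm]
  refine ⟨fun i => r i + r' i, D, (e.prodMap e') ∘ₗ (Ψ 0).toLinearMap,
    (Prod.map_surjective.2 ⟨he, he'⟩).comp (Ψ 0).surjective, fun hn => ?_, fun i hi => ?_⟩
  · rw [hrangeD, ker_comp, ker_prodMap, hker hn, hker' hn, ← range_prodMap]
  · rw [hkerD, hrangeD, ker_prodMap, hexact i hi, hexact' i hi, ← range_prodMap]

theorem isFP_pi (k n : ℕ) : IsFP R (Fin k → R) n := by
  refine ⟨fun | 0 => k | _ + 1 => 0, fun _ => 0, LinearMap.id, surjective_id, fun _ => ?_,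
    fun _ _ => ?_⟩
  · simp
  · exact Subsingleton.elim _ _

end FP

section Semilinear

variable {R S : Type*} [Ring R] [Ring S] {M N : Type*} [AddCommGroup M] [Module R M]
  [AddCommGroup N] [Module S N]

theorem LinearMap.eq_fintypeLinearCombination {α : Type*} [Fintype α] [DecidableEq α]
    (f : (α → R) →ₗ[R] M) : f = Fintype.linearCombination R fun j => f (Pi.single j 1) := by
  ext; simp

def pushCover {σ : R →+* S} (f : M →ₛₗ[σ] N) {a : ℕ} (e : (Fin a → R) →ₗ[R] M) :
    (Fin a → S) →ₗ[S] N :=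
  Fintype.linearCombination S fun j => f (e (Pi.single j 1))

theorem pushCover_comp {σ : R →+* S} (f : M →ₛₗ[σ] N) {a : ℕ} (e : (Fin a → R) →ₗ[R] M)
    (x : Fin a → R) : pushCover f e (σ ∘ x) = f (e x) := by
  conv_rhs => rw [e.eq_fintypeLinearCombination]
  simp [pushCover, Fintype.linearCombination_apply, map_sum, map_smulₛₗ]

theorem pushCover_surjective {σ : R →+* S} {f : M →ₛₗ[σ] N} (hf : Surjective f) {a : ℕ}
    {e : (Fin a → R) →ₗ[R] M} (he : Surjective e) : Surjective (pushCover f e) := by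
  intro y
  obtain ⟨m, rfl⟩ := hf y
  obtain ⟨x, rfl⟩ := he m
  exact ⟨σ ∘ x, pushCover_comp f e x⟩

end Semilinear

structure RetractivePair {R S : Type*} [Ring R] [Ring S] (ρ : R →+* S) (ι : S →+* R)
    (M L : Type*) [AddCommGroup M] [Module R M] [AddCommGroup L] [Module S L] where
  plus : M →ₛₗ[ρ] L
  minus : L →ₛₗ[ι] M
  plus_minus (l : L) : plus (minus l) = l

namespace RetractivePair

universe u v

variable {R : Type u} {S : Type v} [Ring R] [Ring S] {ρ : R →+* S} {ι : S →+* R}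
  {M L : Type*} [AddCommGroup M] [Module R M] [AddCommGroup L] [Module S L]

section Kernels

variable (P : RetractivePair ρ ι M L) {a : ℕ} (e : (Fin a → R) →ₗ[R] M)

theorem plus_surjective : Surjective P.plus := fun l => ⟨P.minus l, P.plus_minus l⟩

theorem minus_pushCover_comp (y : Fin a → S) :
    pushCover P.minus (pushCover P.plus e) (ι ∘ y) = P.minus (pushCover P.plus e y) :=
  pushCover_comp _ _ y

theorem plus_pushCover_pushCover (x : Fin a → R) :
    P.plus (pushCover P.minus (pushCover P.plus e) x) = P.plus (e x) := by
  rw [← pushCover_comp P.plus e, (pushCover P.plus e).eq_fintypeLinearCombination]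
  simp [pushCover, Fintype.linearCombination_apply, map_sum, map_smulₛₗ, P.plus_minus]

/-- `ker e` alone need not retract onto `ker (pushCover P.plus e)`, since `e (ι ∘ y)` need not
vanish; the free summand absorbs this, with `φ` correcting `ι ∘ y` into `ker e`. -/
def kernelPair (hρι : ρ.comp ι = RingHom.id S) (φ : (Fin a → R) →ₗ[R] (Fin a → R))
    (hφ : ∀ x, e (φ x) = pushCover P.minus (pushCover P.plus e) x) :
    RetractivePair ρ ι (ker e × (Fin a → R)) (ker (pushCover P.plus e)) where
  plus :=
    { toFun p := ⟨ρ ∘ (p.1 + p.2 - φ p.2), by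
        rw [mem_ker, pushCover_comp, map_sub, map_add, hφ, map_sub, map_add,
          P.plus_pushCover_pushCover, mem_ker.1 p.1.2, map_zero, zero_add, sub_self]⟩
      map_add' p q := by ext; simp; abel
      map_smul' c p := by ext; simp [mul_sub, mul_add] }
  minus :=
    { toFun y := (⟨φ (ι ∘ y), by
        rw [mem_ker, hφ, P.minus_pushCover_comp, mem_ker.1 y.2, map_zero]⟩, ι ∘ y)
      map_add' y z := by ext <;> simp
      map_smul' c y := by
        have h : ι ∘ (c • (y : Fin a → S)) = ι c • (ι ∘ y) := by
          ext; simp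
        ext <;> simp [h] }
  plus_minus y := by ext; simpa using RingHom.congr_fun hρι _

end Kernels

theorem isFP_zero (P : RetractivePair ρ ι M L) (h : IsFP R M 0) : IsFP S L 0 := by
  obtain ⟨a, e, he⟩ := isFP_zero_iff_s11.1 h
  exact isFP_zero_iff_s11.2 ⟨a, _, pushCover_surjective P.plus_surjective he⟩

theorem isFP_succ (P : RetractivePair ρ ι M L) (hρι : ρ.comp ι = RingHom.id S) {m : ℕ}
    (ih : ∀ (M' : Type u) (L' : Type v) [AddCommGroup M'] [Module R M'] [AddCommGroup L']
      [Module S L'], RetractivePair ρ ι M' L' → IsFP R M' m → IsFP S L' m)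
    (h : IsFP R M (m + 1)) : IsFP S L (m + 1) := by
  obtain ⟨a, e, he, hker⟩ := isFP_succ_iff.1 h
  obtain ⟨φ, hφ⟩ :=
    Module.projective_lifting_property e (pushCover P.minus (pushCover P.plus e)) he
  exact isFP_succ_iff.2 ⟨a, _, pushCover_surjective P.plus_surjective he,
    ih _ _ (P.kernelPair e hρι φ (LinearMap.congr_fun hφ)) (hker.prod (isFP_pi a m))⟩

theorem isFP {M : Type u} {L : Type v} [AddCommGroup M] [Module R M] [AddCommGroup L]
    [Module S L] (P : RetractivePair ρ ι M L) (hρι : ρ.comp ι = RingHom.id S) {n : ℕ}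
    (h : IsFP R M n) : IsFP S L n := by
  induction n generalizing M L with
  | zero => exact P.isFP_zero h
  | succ m ih => exact P.isFP_succ hρι (fun _ _ _ _ _ _ Q => ih Q) h

end RetractivePair

/-- Let `ρ : R →+* S`, `ι : S →+* R` with `ρ ∘ ι = id`, and let
`(M, L, α⁺, α⁻)` be a retractive pair: `α⁺ : M → L` additive and `R`-linear (with `L` an
`R`-module via `ρ`), `α⁻ : L → M` additive and `S`-linear (with `M` an `S`-module via `ι`),
and `α⁺ ∘ α⁻ = id`.  If `M` is of type `FP n` over `R`, then `L` is of type `FP n` over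
`S`. -/
theorem retractive_pair_FP
    (R S : Type*) [Ring R] [Ring S] (ρ : R →+* S) (ι : S →+* R)
    (hρι : ρ.comp ι = RingHom.id S)
    (M : Type*) [AddCommGroup M] [Module R M]
    (L : Type*) [AddCommGroup L] [Module S L]
    (αp : M →+ L) (αm : L →+ M)
    (hretr : ∀ l : L, αp (αm l) = l)
    (hαp : ∀ (r : R) (m : M), αp (r • m) = ρ r • αp m)
    (hαm : ∀ (s : S) (l : L), αm (s • l) = ι s • αm l)
    (n : ℕ) (h : IsFP R M n) :
    IsFP S L n := by
  let P : RetractivePair ρ ι M L :=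
    ⟨{ αp with map_smul' := hαp }, { αm with map_smul' := hαm }, hretr⟩
  -- `RetractivePair.isFP` needs `M`, `L` in the universes of `R`, `S`, where the kernels live.
  cases n with
  | zero => exact P.isFP_zero h
  | succ m => exact P.isFP_succ hρι (fun _ _ _ _ _ _ Q => Q.isFP hρι) h
end

section
/- Let K be a commutative ring, A a K-algebra which is projective as a K-module, with augmentation ε: A → K, and n ≥ 0. If A is of type bi-FP_n, then A is of type left-FP_n and of type right-FP_n. -/
open Function LinearMap TensorProduct MulOpposite

/-!
Regard a resolution `F_• → A` by finitely generated free bimodules `(A ⊗_K A)^r` as a complex of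
right `A`-modules. Since `A` is `K`-projective, a right-linear map out of `(A ⊗_K A)^r` can be
lifted along any right-linear map whose range contains its range (lift the images of the
generators `a ⊗ 1` over `K`, then extend right-linearly), so the exact complex admits a
right-linear contracting homotopy up to degree `n`. Hence it stays exact under the additive
functor `- ⊗_A K`, which sends `(A ⊗_K A)^r` to the free left module `A^r` and `A` to `K`:
this is a resolution witnessing left-`FP_n`. Right-`FP_n` is left-`FP_n` of `Aᵐᵒᵖ`, and the
isomorphism `Aᵐᵒᵖ ⊗_K Aᵐᵒᵖ ≅ A ⊗_K A`, `x ⊗ y ↦ y ⊗ x`, exchanging the two actions, shows that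
`Aᵐᵒᵖ` is bi-`FP_n` too.
-/

lemma LinearMap.compLeft_single {R M N ι : Type*} [Semiring R] [AddCommMonoid M] [Module R M]
    [AddCommMonoid N] [Module R N] [DecidableEq ι] (f : M →ₗ[R] N) (j : ι) (x : M) :
    f.compLeft ι (Pi.single j x) = Pi.single j (f x) :=
  funext <| Pi.apply_single (fun _ => f) (fun _ => f.map_zero) j x

lemma LinearMap.comp_comp_comm {R M M' N N' : Type*} [Semiring R] [AddCommMonoid M]
    [Module R M] [AddCommMonoid M'] [Module R M'] [AddCommMonoid N] [Module R N]
    [AddCommMonoid N'] [Module R N'] {φ : M' →ₗ[R] M} {f : M →ₗ[R] N} {ψ : N →ₗ[R] N'}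
    {L' : M' →ₗ[R] M'} {L : M →ₗ[R] M} {T : N →ₗ[R] N} {T' : N' →ₗ[R] N'}
    (hφ : φ ∘ₗ L' = L ∘ₗ φ) (hf : f ∘ₗ L = T ∘ₗ f) (hψ : ψ ∘ₗ T = T' ∘ₗ ψ) :
    (ψ ∘ₗ f ∘ₗ φ) ∘ₗ L' = T' ∘ₗ ψ ∘ₗ f ∘ₗ φ := by
  rw [LinearMap.comp_assoc, LinearMap.comp_assoc, hφ, ← LinearMap.comp_assoc φ L f, hf,
    LinearMap.comp_assoc, ← LinearMap.comp_assoc _ T ψ, hψ, LinearMap.comp_assoc]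

lemma LinearEquiv.symm_comp_comm {R M N : Type*} [Semiring R] [AddCommMonoid M] [Module R M]
    [AddCommMonoid N] [Module R N] (Φ : M ≃ₗ[R] N) {L : M →ₗ[R] M} {L' : N →ₗ[R] N}
    (h : Φ.toLinearMap ∘ₗ L = L' ∘ₗ Φ.toLinearMap) :
    Φ.symm.toLinearMap ∘ₗ L' = L ∘ₗ Φ.symm.toLinearMap := by
  rw [LinearEquiv.toLinearMap_symm_comp_eq, ← LinearMap.comp_assoc, h, LinearMap.comp_assoc,
    LinearEquiv.comp_symm, LinearMap.comp_id]

section FreeBimodule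

variable {K A : Type*} [CommRing K] [Ring A] [Algebra K A]

@[simp] lemma lmulT_tmul (a x y : A) : lmulT K A a (x ⊗ₜ[K] y) = (a * x) ⊗ₜ[K] y := rfl

@[simp] lemma rmulT_tmul (b x y : A) : rmulT K A b (x ⊗ₜ[K] y) = x ⊗ₜ[K] (y * b) := rfl

lemma rmulT_mul (b c : A) : rmulT K A (b * c) = rmulT K A c ∘ₗ rmulT K A b :=
  TensorProduct.ext' fun x y => by simp [mul_assoc]

lemma rmulT_add (b c : A) : rmulT K A (b + c) = rmulT K A b + rmulT K A c :=
  TensorProduct.ext' fun x y => by simp [mul_add, tmul_add]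

lemma rmulT_smul (k : K) (b : A) : rmulT K A (k • b) = k • rmulT K A b :=
  TensorProduct.ext' fun x y => by simp [tmul_smul]

variable (K A) in
noncomputable def tmulOne : A →ₗ[K] A ⊗[K] A := (TensorProduct.mk K A A).flip 1

@[simp] lemma tmulOne_apply (a : A) : tmulOne K A a = a ⊗ₜ[K] 1 := rfl

def IsRightLinear {ι κ : Type*} (f : (ι → A ⊗[K] A) →ₗ[K] (κ → A ⊗[K] A)) : Prop :=
  ∀ b : A, f ∘ₗ (rmulT K A b).compLeft ι = (rmulT K A b).compLeft κ ∘ₗ f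

variable {ι κ μ : Type*}

lemma IsRightLinear.apply {f : (ι → A ⊗[K] A) →ₗ[K] (κ → A ⊗[K] A)} (hf : IsRightLinear f)
    (b : A) (x : ι → A ⊗[K] A) :
    f ((rmulT K A b).compLeft ι x) = (rmulT K A b).compLeft κ (f x) :=
  LinearMap.congr_fun (hf b) x

lemma isRightLinear_id : IsRightLinear (LinearMap.id : (ι → A ⊗[K] A) →ₗ[K] _) := fun _ => rfl

lemma IsRightLinear.comp {f : (κ → A ⊗[K] A) →ₗ[K] (μ → A ⊗[K] A)}
    {g : (ι → A ⊗[K] A) →ₗ[K] (κ → A ⊗[K] A)} (hf : IsRightLinear f) (hg : IsRightLinear g) :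
    IsRightLinear (f ∘ₗ g) := fun b => by
  rw [LinearMap.comp_assoc, hg b, ← LinearMap.comp_assoc, hf b, LinearMap.comp_assoc]

lemma IsRightLinear.sub {f g : (ι → A ⊗[K] A) →ₗ[K] (κ → A ⊗[K] A)} (hf : IsRightLinear f)
    (hg : IsRightLinear g) : IsRightLinear (f - g) := fun b => by
  rw [LinearMap.sub_comp, LinearMap.comp_sub, hf b, hg b]

noncomputable def rightExtend (β : A →ₗ[K] (κ → A ⊗[K] A)) : A ⊗[K] A →ₗ[K] (κ → A ⊗[K] A) :=
  TensorProduct.lift <| LinearMap.mk₂ K (fun a b => (rmulT K A b).compLeft κ (β a))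
    (fun _ _ _ => by simp only [map_add])
    (fun _ _ _ => by simp only [map_smul])
    (fun _ _ _ => funext fun _ => by simp [rmulT_add])
    (fun _ _ _ => funext fun _ => by simp [rmulT_smul])

@[simp] lemma rightExtend_tmul (β : A →ₗ[K] (κ → A ⊗[K] A)) (a b : A) :
    rightExtend β (a ⊗ₜ[K] b) = (rmulT K A b).compLeft κ (β a) := rfl

lemma rightExtend_comp_rmulT (β : A →ₗ[K] (κ → A ⊗[K] A)) (b : A) :
    rightExtend β ∘ₗ rmulT K A b = (rmulT K A b).compLeft κ ∘ₗ rightExtend β :=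
  TensorProduct.ext' fun x y => funext fun k => by simp [rmulT_mul]

lemma IsRightLinear.comp_rightExtend {p : (ι → A ⊗[K] A) →ₗ[K] (μ → A ⊗[K] A)}
    (hp : IsRightLinear p) {β : A →ₗ[K] (ι → A ⊗[K] A)} {f : A ⊗[K] A →ₗ[K] (μ → A ⊗[K] A)}
    (hf : ∀ b, f ∘ₗ rmulT K A b = (rmulT K A b).compLeft μ ∘ₗ f)
    (hβ : ∀ a, p (β a) = f (tmulOne K A a)) :
    p ∘ₗ rightExtend β = f :=
  TensorProduct.ext' fun a b => by
    simpa [hp.apply, hβ] using (LinearMap.congr_fun (hf b) (a ⊗ₜ 1)).symm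

theorem IsRightLinear.exists_lift [Module.Projective K A] [Fintype ι] [DecidableEq ι]
    {f : (ι → A ⊗[K] A) →ₗ[K] (μ → A ⊗[K] A)} {p : (κ → A ⊗[K] A) →ₗ[K] (μ → A ⊗[K] A)}
    (hf : IsRightLinear f) (hp : IsRightLinear p) (hfp : range f ≤ range p) :
    ∃ g : (ι → A ⊗[K] A) →ₗ[K] (κ → A ⊗[K] A), IsRightLinear g ∧ p ∘ₗ g = f := by
  have lift_generators (j : ι) : ∃ β : A →ₗ[K] (κ → A ⊗[K] A),
      ∀ a, p (β a) = (f ∘ₗ LinearMap.single K _ j) (tmulOne K A a) := by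
    obtain ⟨β, hβ⟩ := Module.projective_lifting_property p.rangeRestrict
      ((f ∘ₗ LinearMap.single K _ j ∘ₗ tmulOne K A).codRestrict _ fun a => hfp ⟨_, rfl⟩)
      p.surjective_rangeRestrict
    exact ⟨β, fun a => congrArg Subtype.val (LinearMap.congr_fun hβ a)⟩
  choose β hβ using lift_generators
  refine ⟨LinearMap.lsum K _ K fun j => rightExtend (β j), fun b => ?_, ?_⟩
  · refine LinearMap.pi_ext fun j t => ?_
    simp only [LinearMap.comp_apply, compLeft_single, LinearMap.lsum_piSingle]
    exact LinearMap.congr_fun (rightExtend_comp_rmulT (β j) b) t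
  · refine LinearMap.pi_ext fun j t => ?_
    rw [LinearMap.comp_apply, LinearMap.lsum_piSingle]
    refine LinearMap.congr_fun (hp.comp_rightExtend (fun b => ?_) (hβ j)) t
    refine LinearMap.ext fun t => ?_
    simpa [compLeft_single] using hf.apply b (Pi.single j t)

end FreeBimodule

section Descent

variable {K A : Type*} [CommRing K] [Ring A] [Algebra K A] (ε : A →ₐ[K] K) {ι κ μ : Type*}

/-- The identification `(A ⊗_K A) ⊗_A K ≅ A`. -/
noncomputable def rightAug : A ⊗[K] A →ₗ[K] A :=
  TensorProduct.rid K A ∘ₗ ε.toLinearMap.lTensor A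

@[simp] lemma rightAug_tmul (u v : A) : rightAug ε (u ⊗ₜ[K] v) = ε v • u := rfl

lemma rightAug_tmulOne (a : A) : rightAug ε (tmulOne K A a) = a := by simp

lemma rightAug_compLeft_tmulOne (x : ι → A) :
    (rightAug ε).compLeft ι ((tmulOne K A).compLeft ι x) = x :=
  funext fun _ => rightAug_tmulOne ε _

lemma rightAug_rmulT (b : A) (t : A ⊗[K] A) : rightAug ε (rmulT K A b t) = ε b • rightAug ε t := by
  have : rightAug ε ∘ₗ rmulT K A b = ε b • rightAug ε :=
    TensorProduct.ext' fun x y => by simp [mul_smul, mul_comm (ε y)]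
  exact LinearMap.congr_fun this t

lemma rightAug_lmulT (a : A) (t : A ⊗[K] A) : rightAug ε (lmulT K A a t) = a * rightAug ε t := by
  have : rightAug ε ∘ₗ lmulT K A a = LinearMap.mulLeft K a ∘ₗ rightAug ε :=
    TensorProduct.ext' fun x y => by simp
  exact LinearMap.congr_fun this t

theorem comp_tmulOne_comp_rightAug [Finite ι] {N : Type*} [AddCommGroup N] [Module K N]
    (ψ : (ι → A ⊗[K] A) →ₗ[K] N) (hψ : ∀ b x, ψ ((rmulT K A b).compLeft ι x) = ε b • ψ x) :
    ψ ∘ₗ (tmulOne K A).compLeft ι ∘ₗ (rightAug ε).compLeft ι = ψ := by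
  classical
  refine LinearMap.pi_ext' fun j => TensorProduct.ext' fun u v => ?_
  have hsingle : (Pi.single j (u ⊗ₜ[K] v) : ι → A ⊗[K] A) =
      (rmulT K A v).compLeft ι (Pi.single j (u ⊗ₜ 1)) := by
    simp [compLeft_single]
  simp only [LinearMap.comp_apply, LinearMap.single_apply, hsingle, hψ]
  simp [compLeft_single, Pi.single_smul]

/-- `f ⊗_A K`, read through `rightAug`. -/
noncomputable def descend (f : (ι → A ⊗[K] A) →ₗ[K] (κ → A ⊗[K] A)) : (ι → A) →ₗ[K] (κ → A) :=
  (rightAug ε).compLeft κ ∘ₗ f ∘ₗ (tmulOne K A).compLeft ι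

/-- `e ⊗_A K : F₀ ⊗_A K → A ⊗_A K = K`. -/
noncomputable def descendAug (e : (ι → A ⊗[K] A) →ₗ[K] A) : (ι → A) →ₗ[K] K :=
  ε.toLinearMap ∘ₗ e ∘ₗ (tmulOne K A).compLeft ι

variable {ε}

lemma IsRightLinear.rightAug_apply {f : (ι → A ⊗[K] A) →ₗ[K] (κ → A ⊗[K] A)}
    (hf : IsRightLinear f) (b : A) (x : ι → A ⊗[K] A) :
    (rightAug ε).compLeft κ (f ((rmulT K A b).compLeft ι x)) =
      ε b • (rightAug ε).compLeft κ (f x) :=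
  funext fun k => by simp [hf.apply, rightAug_rmulT]

lemma IsRightLinear.descend_rightAug [Finite ι] {f : (ι → A ⊗[K] A) →ₗ[K] (κ → A ⊗[K] A)}
    (hf : IsRightLinear f) (x : ι → A ⊗[K] A) :
    descend ε f ((rightAug ε).compLeft ι x) = (rightAug ε).compLeft κ (f x) :=
  LinearMap.congr_fun (comp_tmulOne_comp_rightAug ε ((rightAug ε).compLeft κ ∘ₗ f)
    hf.rightAug_apply) x

lemma IsRightLinear.descend_comp [Finite κ] {f : (κ → A ⊗[K] A) →ₗ[K] (μ → A ⊗[K] A)}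
    (hf : IsRightLinear f) (g : (ι → A ⊗[K] A) →ₗ[K] (κ → A ⊗[K] A)) :
    descend ε (f ∘ₗ g) = descend ε f ∘ₗ descend ε g :=
  LinearMap.ext fun _ => (hf.descend_rightAug _).symm

lemma IsRightLinear.rightAug_mem_range_descend [Finite ι]
    {d : (ι → A ⊗[K] A) →ₗ[K] (κ → A ⊗[K] A)} (hd : IsRightLinear d) {x : κ → A ⊗[K] A}
    (hx : x ∈ range d) : (rightAug ε).compLeft κ x ∈ range (descend ε d) := by
  obtain ⟨y, rfl⟩ := hx
  exact ⟨_, hd.descend_rightAug y⟩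

lemma descendAug_rightAug [Finite ι] {e : (ι → A ⊗[K] A) →ₗ[K] A}
    (he : ∀ b, e ∘ₗ (rmulT K A b).compLeft ι = LinearMap.mulRight K b ∘ₗ e) (x : ι → A ⊗[K] A) :
    descendAug ε e ((rightAug ε).compLeft ι x) = ε (e x) := by
  refine LinearMap.congr_fun (comp_tmulOne_comp_rightAug ε (ε.toLinearMap ∘ₗ e) ?_) x
  intro b y
  simp [← LinearMap.comp_apply e, he b, mul_comm]

lemma descend_smul {f : (ι → A ⊗[K] A) →ₗ[K] (κ → A ⊗[K] A)}
    (hf : ∀ a, f ∘ₗ (lmulT K A a).compLeft ι = (lmulT K A a).compLeft κ ∘ₗ f)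
    (a : A) (x : ι → A) : descend ε f (a • x) = a • descend ε f x := by
  change (rightAug ε).compLeft κ (f ((lmulT K A a).compLeft ι ((tmulOne K A).compLeft ι x))) = _
  rw [← LinearMap.comp_apply f, hf a]
  exact funext fun k => rightAug_lmulT ε a _

lemma descendAug_smul {e : (ι → A ⊗[K] A) →ₗ[K] A}
    (he : ∀ a, e ∘ₗ (lmulT K A a).compLeft ι = LinearMap.mulLeft K a ∘ₗ e) (a : A) (x : ι → A) :
    descendAug ε e (a • x) = ε a * descendAug ε e x := by
  change ε (e ((lmulT K A a).compLeft ι ((tmulOne K A).compLeft ι x))) = _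
  rw [← LinearMap.comp_apply e, he a]
  simp [descendAug]

variable (ε) in
noncomputable def descendLinear (f : (ι → A ⊗[K] A) →ₗ[K] (κ → A ⊗[K] A))
    (hf : ∀ a, f ∘ₗ (lmulT K A a).compLeft ι = (lmulT K A a).compLeft κ ∘ₗ f) :
    (ι → A) →ₗ[A] (κ → A) :=
  { descend ε f with map_smul' := descend_smul hf }

end Descent

section Exactness

variable {K A : Type*} [CommRing K] [Ring A] [Algebra K A] {ε : A →ₐ[K] K} {ι κ μ : Type*}

/-- Lifting `id - σ ∘ δ` along `d` gives the next step of a right-linear contracting homotopy. -/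
theorem exists_rightLinear_section [Module.Projective K A] [Fintype κ] [DecidableEq κ]
    {M : Type*} [AddCommGroup M] [Module K M]
    {d : (ι → A ⊗[K] A) →ₗ[K] (κ → A ⊗[K] A)} {δ : (κ → A ⊗[K] A) →ₗ[K] M}
    {σ : M →ₗ[K] (κ → A ⊗[K] A)} (hd : IsRightLinear d) (hσδ : IsRightLinear (σ ∘ₗ δ))
    (hσ : ∀ y ∈ range δ, δ (σ y) = y) (hexact : ker δ = range d) :
    ∃ s : (κ → A ⊗[K] A) →ₗ[K] (ι → A ⊗[K] A), IsRightLinear s ∧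
      ∀ y ∈ range d, d (s y) = y := by
  obtain ⟨s, hs, hds⟩ := (isRightLinear_id.sub hσδ).exists_lift hd <| by
    rintro _ ⟨x, rfl⟩
    rw [← hexact, mem_ker]
    simp [hσ _ ⟨x, rfl⟩]
  refine ⟨s, hs, fun y hy => ?_⟩
  have hδy : δ y = 0 := by rwa [← mem_ker, hexact]
  simp [← LinearMap.comp_apply d s, hds, hδy]

theorem mem_range_descend_of_section [Finite ι] {M : Type*} [AddCommGroup M] [Module K M]
    {d : (ι → A ⊗[K] A) →ₗ[K] (κ → A ⊗[K] A)} {δ : (κ → A ⊗[K] A) →ₗ[K] M}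
    {σ : M →ₗ[K] (κ → A ⊗[K] A)} (hd : IsRightLinear d) (hσ : ∀ y ∈ range δ, δ (σ y) = y)
    (hexact : ker δ = range d) {u : κ → A}
    (hu : (rightAug ε).compLeft κ (σ (δ ((tmulOne K A).compLeft κ u))) = 0) :
    u ∈ range (descend ε d) := by
  set x := (tmulOne K A).compLeft κ u
  have hx : x - σ (δ x) ∈ range d := by
    rw [← hexact, mem_ker, map_sub, hσ _ ⟨x, rfl⟩, sub_self]
  simpa [hu, x, rightAug_compLeft_tmulOne] using hd.rightAug_mem_range_descend (ε := ε) hx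

theorem ker_descend_eq_range_descend [Finite ι] [Finite κ] [Finite μ]
    {d : (ι → A ⊗[K] A) →ₗ[K] (κ → A ⊗[K] A)} {d' : (κ → A ⊗[K] A) →ₗ[K] (μ → A ⊗[K] A)}
    {s : (μ → A ⊗[K] A) →ₗ[K] (κ → A ⊗[K] A)} (hd : IsRightLinear d) (hd' : IsRightLinear d')
    (hs : IsRightLinear s) (hs_sec : ∀ y ∈ range d', d' (s y) = y)
    (hexact : ker d' = range d) : ker (descend ε d') = range (descend ε d) := by
  refine le_antisymm (fun u hu => mem_range_descend_of_section hd hs_sec hexact ?_) ?_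
  · rw [← hs.descend_rightAug]
    exact (congrArg (descend ε s) hu).trans (map_zero _)
  · rintro _ ⟨u, rfl⟩
    have hdd : d' ∘ₗ d = 0 := LinearMap.ext fun y => hexact.ge ⟨y, rfl⟩
    rw [mem_ker, ← LinearMap.comp_apply, ← hd'.descend_comp, hdd]
    rfl

lemma exists_rightLinear_splitting {e : (ι → A ⊗[K] A) →ₗ[K] A}
    (he : ∀ b, e ∘ₗ (rmulT K A b).compLeft ι = LinearMap.mulRight K b ∘ₗ e) (hsurj : Surjective e) :
    ∃ σ : A →ₗ[K] (ι → A ⊗[K] A), (∀ m, e (σ m) = m) ∧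
      ∀ b m, σ (m * b) = (rmulT K A b).compLeft ι (σ m) := by
  obtain ⟨y, hy⟩ := hsurj 1
  refine ⟨{ toFun m := (rmulT K A m).compLeft ι y
            map_add' _ _ := funext fun _ => by simp [rmulT_add]
            map_smul' _ _ := funext fun _ => by simp [rmulT_smul] }, fun m => ?_, fun b m => ?_⟩
  · simpa [hy] using LinearMap.congr_fun (he m) y
  · exact funext fun _ => by simp [rmulT_mul]

theorem ker_descendAug_eq_range_descend [Finite ι] [Finite κ]
    {d : (ι → A ⊗[K] A) →ₗ[K] (κ → A ⊗[K] A)} {e : (κ → A ⊗[K] A) →ₗ[K] A}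
    (hd : IsRightLinear d) (he : ∀ b, e ∘ₗ (rmulT K A b).compLeft κ = LinearMap.mulRight K b ∘ₗ e)
    {σ : A →ₗ[K] (κ → A ⊗[K] A)} (hσ : ∀ m, e (σ m) = m)
    (hσr : ∀ b m, σ (m * b) = (rmulT K A b).compLeft κ (σ m)) (hexact : ker e = range d) :
    ker (descendAug ε e) = range (descend ε d) := by
  refine le_antisymm (fun u hu => mem_range_descend_of_section hd (fun y _ => hσ y) hexact ?_) ?_
  · have hσ1 (m : A) : σ m = (rmulT K A m).compLeft κ (σ 1) := by rw [← hσr, one_mul]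
    have hεu : ε (e ((tmulOne K A).compLeft κ u)) = 0 := hu
    rw [hσ1]
    exact funext fun _ => by simp [rightAug_rmulT, hεu]
  · rintro _ ⟨u, rfl⟩
    rw [mem_ker, descend, LinearMap.comp_apply, descendAug_rightAug he]
    simp [show e _ = 0 from hexact.ge ⟨_, rfl⟩]

end Exactness

section LeftFP

variable {K A : Type*} [CommRing K] [Ring A] [Algebra K A]

theorem exists_rightLinear_sections [Module.Projective K A] {n : ℕ} {r : ℕ → ℕ}
    {d : ∀ i, (Fin (r (i + 1)) → A ⊗[K] A) →ₗ[K] (Fin (r i) → A ⊗[K] A)}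
    {e : (Fin (r 0) → A ⊗[K] A) →ₗ[K] A} {σ : A →ₗ[K] (Fin (r 0) → A ⊗[K] A)}
    (hd : ∀ i, IsRightLinear (d i))
    (he : ∀ b, e ∘ₗ (rmulT K A b).compLeft _ = LinearMap.mulRight K b ∘ₗ e)
    (hσ : ∀ m, e (σ m) = m) (hσr : ∀ b m, σ (m * b) = (rmulT K A b).compLeft _ (σ m))
    (h0 : 0 < n → ker e = range (d 0))
    (hstep : ∀ i, i + 1 < n → ker (d i) = range (d (i + 1))) :
    ∀ m < n, ∃ s : (Fin (r m) → A ⊗[K] A) →ₗ[K] (Fin (r (m + 1)) → A ⊗[K] A),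
      IsRightLinear s ∧ ∀ y ∈ range (d m), d m (s y) = y := by
  intro m hm
  induction m with
  | zero =>
    have hσe : IsRightLinear (σ ∘ₗ e) := fun b => LinearMap.ext fun x => by
      simp only [LinearMap.comp_apply]
      rw [← LinearMap.comp_apply e, he b]
      exact hσr b (e x)
    exact exists_rightLinear_section (hd 0) hσe (fun y _ => hσ y) (h0 hm)
  | succ m ih =>
    obtain ⟨s, hs, hds⟩ := ih (by omega)
    exact exists_rightLinear_section (hd (m + 1)) (hs.comp (hd m)) hds (hstep m hm)

theorem leftFP_of_biFP [Module.Projective K A] (ε : A →ₐ[K] K) {n : ℕ} (h : BiFP K A n) :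
    LeftFP A ε.toRingHom n := by
  obtain ⟨r, d, e, hdl, hdr, hel, her, hsurj, h0, hstep⟩ := h
  obtain ⟨σ, hσ, hσr⟩ := exists_rightLinear_splitting her hsurj
  have sections := exists_rightLinear_sections hdr her hσ hσr h0 hstep
  let _ : Module A K := Module.compHom K ε.toRingHom
  refine ⟨r, fun i => descendLinear ε (d i) (hdl i),
    { descendAug ε e with map_smul' := descendAug_smul hel }, fun k => ?_, fun hn => ?_,
    fun i hi => ?_⟩
  · obtain ⟨w, hw⟩ := hsurj (algebraMap K A k)
    exact ⟨_, (descendAug_rightAug her w).trans (by simp [hw])⟩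
  · exact SetLike.ext fun x => SetLike.ext_iff.mp
      (ker_descendAug_eq_range_descend (ε := ε) (hdr 0) her hσ hσr (h0 hn)) x
  · obtain ⟨s, hs, hds⟩ := sections i (by omega)
    exact SetLike.ext fun x => SetLike.ext_iff.mp
      (ker_descend_eq_range_descend (ε := ε) (hdr (i + 1)) (hdr i) hs hds (hstep i hi)) x

end LeftFP

section Opposite

variable {K A : Type*} [CommRing K] [Ring A] [Algebra K A]

variable (K A) in
noncomputable def opTensorEquiv : Aᵐᵒᵖ ⊗[K] Aᵐᵒᵖ ≃ₗ[K] A ⊗[K] A :=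
  TensorProduct.comm K Aᵐᵒᵖ Aᵐᵒᵖ ≪≫ₗ
    TensorProduct.congr (opLinearEquiv K).symm (opLinearEquiv K).symm

@[simp] lemma opTensorEquiv_tmul (x y : Aᵐᵒᵖ) :
    opTensorEquiv K A (x ⊗ₜ[K] y) = unop y ⊗ₜ[K] unop x := rfl

variable (K A) in
noncomputable def opFreeEquiv (ι : Type*) :
    (ι → Aᵐᵒᵖ ⊗[K] Aᵐᵒᵖ) ≃ₗ[K] (ι → A ⊗[K] A) :=
  LinearEquiv.piCongrRight fun _ => opTensorEquiv K A

lemma opFreeEquiv_comp_lmulT {ι : Type*} (a : Aᵐᵒᵖ) :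
    (opFreeEquiv K A ι).toLinearMap ∘ₗ (lmulT K Aᵐᵒᵖ a).compLeft ι =
      (rmulT K A (unop a)).compLeft ι ∘ₗ (opFreeEquiv K A ι).toLinearMap := by
  have : (opTensorEquiv K A).toLinearMap ∘ₗ lmulT K Aᵐᵒᵖ a =
      rmulT K A (unop a) ∘ₗ (opTensorEquiv K A).toLinearMap :=
    TensorProduct.ext' fun x y => by simp
  exact LinearMap.ext fun x => funext fun k => LinearMap.congr_fun this (x k)

lemma opFreeEquiv_comp_rmulT {ι : Type*} (b : Aᵐᵒᵖ) :
    (opFreeEquiv K A ι).toLinearMap ∘ₗ (rmulT K Aᵐᵒᵖ b).compLeft ι =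
      (lmulT K A (unop b)).compLeft ι ∘ₗ (opFreeEquiv K A ι).toLinearMap := by
  have : (opTensorEquiv K A).toLinearMap ∘ₗ rmulT K Aᵐᵒᵖ b =
      lmulT K A (unop b) ∘ₗ (opTensorEquiv K A).toLinearMap :=
    TensorProduct.ext' fun x y => by simp
  exact LinearMap.ext fun x => funext fun k => LinearMap.congr_fun this (x k)

lemma opLinearEquiv_comp_mulRight (a : A) :
    (opLinearEquiv K).toLinearMap ∘ₗ LinearMap.mulRight K a =
      LinearMap.mulLeft K (op a) ∘ₗ (opLinearEquiv K).toLinearMap := rfl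

lemma opLinearEquiv_comp_mulLeft (a : A) :
    (opLinearEquiv K).toLinearMap ∘ₗ LinearMap.mulLeft K a =
      LinearMap.mulRight K (op a) ∘ₗ (opLinearEquiv K).toLinearMap := rfl

theorem BiFP.op {n : ℕ} (h : BiFP K A n) : BiFP K Aᵐᵒᵖ n := by
  obtain ⟨r, d, e, hdl, hdr, hel, her, hsurj, h0, hstep⟩ := h
  let Φ (m : ℕ) := opFreeEquiv K A (Fin m)
  refine ⟨r, fun i => (Φ (r i)).symm.toLinearMap ∘ₗ d i ∘ₗ (Φ (r (i + 1))).toLinearMap,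
    (opLinearEquiv K).toLinearMap ∘ₗ e ∘ₗ (Φ (r 0)).toLinearMap,
    fun i a => LinearMap.comp_comp_comm (opFreeEquiv_comp_lmulT a) (hdr i (unop a))
      ((Φ _).symm_comp_comm (opFreeEquiv_comp_lmulT a)),
    fun i b => LinearMap.comp_comp_comm (opFreeEquiv_comp_rmulT b) (hdl i (unop b))
      ((Φ _).symm_comp_comm (opFreeEquiv_comp_rmulT b)),
    fun a => LinearMap.comp_comp_comm (opFreeEquiv_comp_lmulT a) (her (unop a))
      (opLinearEquiv_comp_mulRight (unop a)),
    fun b => LinearMap.comp_comp_comm (opFreeEquiv_comp_rmulT b) (hel (unop b))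
      (opLinearEquiv_comp_mulLeft (unop b)),
    (opLinearEquiv K).surjective.comp (hsurj.comp (Φ _).surjective), fun hn => ?_, fun i hi => ?_⟩
  · refine LinearMap.exact_iff.mp <|
      (LinearMap.exact_iff.mpr (h0 hn)).of_ladder_linearEquiv_of_exact
        (e₁ := (Φ _).symm) (e₂ := (Φ _).symm) (e₃ := opLinearEquiv K) ?_ ?_ <;> ext <;> simp
  · refine LinearMap.exact_iff.mp <|
      (LinearMap.exact_iff.mpr (hstep i hi)).of_ladder_linearEquiv_of_exact
        (e₁ := (Φ _).symm) (e₂ := (Φ _).symm) (e₃ := (Φ _).symm) ?_ ?_ <;> ext <;> simp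

end Opposite

/-- If `A` is a `K`-algebra which is projective as a `K`-module, with
augmentation `ε`, and `A` is of type bi-`FP n`, then `A` is of type left-`FP n` and of type
right-`FP n`. -/
theorem biFP_imp_leftFP_and_rightFP_of_projective
    (K : Type*) [CommRing K] (A : Type*) [Ring A] [Algebra K A]
    (hproj : Module.Projective K A) (ε : A →ₐ[K] K) (n : ℕ)
    (h : BiFP K A n) :
    LeftFP A ε.toRingHom n ∧ RightFP A ε.toRingHom n := by
  have : Module.Projective K Aᵐᵒᵖ := .of_equiv' (opLinearEquiv K)
  exact ⟨leftFP_of_biFP ε h, leftFP_of_biFP (ε.fromOpposite fun _ _ => .all _ _) h.op⟩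
end
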